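/- arXiv:1111.4306 — 2 statements merged into one kernel-verified Lean document; each statement's English description precedes it below -/
import Mathlib

section
/- Covering property of the normalizing transformation (z-only case). Under the hypotheses of the local stability lemma in the large-κ case, the real analytic symplectic transformation Ψ: D_{2r}→D_{3r} produced by the normal form lemma (with |Ψ−id|_{2r} ≤ (18mr₂/r₁)εT) satisfies Ψ(D^{real}_{5r/3}) ⊇ D^{real}_r, where D^{real}_{a,b} = {z∈ℝ^{2n}: |I(z)−I⁰|<a, |z|<b}. -/
noncomputable section

open scoped BigOperators
open Real

/-- Complex phase space: `n` conjugate pairs. -/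
abbrev CVec (n : ℕ) := Fin n → ℂ × ℂ

/-- Real phase space: `n` conjugate pairs. -/
abbrev RVec (n : ℕ) := Fin n → ℝ × ℝ

/-- Embedding of the real phase space into the complex one. -/
def embedR {n : ℕ} (z : RVec n) : CVec n := fun j => (((z j).1 : ℂ), ((z j).2 : ℂ))

/-- The (complex) action `I_j(z) = (x_j^2 + y_j^2)/2`. -/
def cAction {n : ℕ} (z : CVec n) (j : Fin n) : ℂ := ((z j).1 ^ 2 + (z j).2 ^ 2) / 2

/-- `|I(z) - I⁰| = ∑_j |I_j(z) - I⁰_j|`. -/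
def cActionDist {n : ℕ} (z : CVec n) (I0 : Fin n → ℝ) : ℝ :=
  ∑ j, ‖cAction z j - (I0 j : ℂ)‖

/-- Square of the euclidean norm on the complex phase space. -/
def cNormSq {n : ℕ} (z : CVec n) : ℝ :=
  ∑ j, (‖(z j).1‖ ^ 2 + ‖(z j).2‖ ^ 2)

/-- Euclidean norm on the complex phase space. -/
def cNorm {n : ℕ} (z : CVec n) : ℝ := Real.sqrt (cNormSq z)

/-- The `z`-only domain `D_{r₁,r₂} = {z ∈ ℂ^{2n} : |I(z) − I⁰| < r₁, |z| < r₂}`. -/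
def DomZ {n : ℕ} (I0 : Fin n → ℝ) (r : ℝ × ℝ) : Set (CVec n) :=
  {z | cActionDist z I0 < r.1 ∧ cNorm z < r.2}

/-- A vector in `ℂ^{2n}` is real if all its components are. -/
def IsRealVec {n : ℕ} (z : CVec n) : Prop := ∀ j, ((z j).1.im = 0 ∧ (z j).2.im = 0)

/-- The (real) action `I_j(z) = (x_j^2 + y_j^2)/2`. -/
def rAction {n : ℕ} (z : RVec n) (j : Fin n) : ℝ := ((z j).1 ^ 2 + (z j).2 ^ 2) / 2

/-- Square of the euclidean norm. -/
def rNormSq {n : ℕ} (z : RVec n) : ℝ := ∑ j, ((z j).1 ^ 2 + (z j).2 ^ 2)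

/-- Euclidean norm. -/
def rNorm {n : ℕ} (z : RVec n) : ℝ := Real.sqrt (rNormSq z)

/-- Basis vector in the `x_j` direction. -/
def rex {n : ℕ} (j : Fin n) : RVec n := Function.update (0 : RVec n) j (1, 0)

/-- Basis vector in the `y_j` direction. -/
def rey {n : ℕ} (j : Fin n) : RVec n := Function.update (0 : RVec n) j (0, 1)

/-- Hamiltonian vector field of `H` on `ℝ^{2n} × ℝ^{2N}` (standard symplectic structure). -/
def rHamVF {n N : ℕ} (H : RVec n × RVec N → ℝ) (p : RVec n × RVec N) : RVec n × RVec N :=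
  (fun j => (fderiv ℝ H p (rey j, 0), -(fderiv ℝ H p (rex j, 0))),
   fun j => (fderiv ℝ H p ((0 : RVec n), rey j), -(fderiv ℝ H p ((0 : RVec n), rex j))))

/-- Integral curve of the Hamiltonian `H` on `ℝ^{2n} × ℝ^{2N}`. -/
def IsHamCurve {n N : ℕ} (H : RVec n × RVec N → ℝ) (γ : ℝ → RVec n × RVec N) : Prop :=
  ∀ t : ℝ, HasDerivAt γ (rHamVF H (γ t)) t

/-- `l¹` norm on `ℝⁿ`. -/
def l1Norm {n : ℕ} (v : Fin n → ℝ) : ℝ := ∑ j, |v j|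

/-- Operator norm of a matrix with respect to the `l¹` norm. -/
def l1OpNorm {n : ℕ} (A : Matrix (Fin n) (Fin n) ℝ) : ℝ :=
  sInf {c | 0 ≤ c ∧ ∀ v, l1Norm (A.mulVec v) ≤ c * l1Norm v}

/-- The euclidean norm of a frequency vector. -/
def euclNorm {n : ℕ} (ω : Fin n → ℝ) : ℝ := Real.sqrt (∑ j, (ω j) ^ 2)

/-- The real quadratic part `½⟨A(I(z) − I⁰), I(z) − I⁰⟩`. -/
def quadAR {n : ℕ} (A : Matrix (Fin n) (Fin n) ℝ) (I0 : Fin n → ℝ) (z : RVec n) : ℝ :=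
  (1 / 2) * ∑ i, ∑ j, A i j * (rAction z i - I0 i) * (rAction z j - I0 j)

/-- The standard symplectic form on `ℂ^{2n}`. -/
def sympZ {n : ℕ} (u v : CVec n) : ℂ :=
  ∑ j, ((u j).1 * (v j).2 - (u j).2 * (v j).1)

/-- A transformation of `ℂ^{2n}` is symplectic on `s` if its derivative preserves the
symplectic form. -/
def IsSymplecticOnZ {n : ℕ} (Ψ : CVec n → CVec n) (s : Set (CVec n)) : Prop :=
  ∀ p ∈ s, ∀ u v, sympZ (fderiv ℂ Ψ p u) (fderiv ℂ Ψ p v) = sympZ u v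

/-!
Let `w` be a real point of `D_r` and `ρ = r₁ / (4 r₂)`; the `2ρ`-ball around `w` lies in
`D_{2r}`, and the smallness of `m² ε T` gives `4 δ ≤ ρ` for `δ = (18 m r₂ / r₁) ε T`. Since
`|Ψ - id| ≤ δ` on that ball, the Schwarz lemma makes `id - Ψ` a `1/2`-Lipschitz map on the
`δ`-ball around `w`, so `z ↦ w + (z - Ψ z)` contracts the real points of this closed ball into
themselves. Its fixed point `z` is real, satisfies `Ψ z = w`, and `|z - w| ≤ δ` keeps it in
`D_{5r/3}`.
-/

open Metric Set

section ComplexBanach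

variable {V : Type*} [NormedAddCommGroup V] [NormedSpace ℂ V]

theorem lipschitzOnWith_sub_of_norm_sub_id_le {Ψ : V → V} {w : V} {ρ δ : ℝ}
    (hρ : 0 < ρ) (hδρ : 4 * δ ≤ ρ) (hΨ : DifferentiableOn ℂ Ψ (ball w (2 * ρ)))
    (hΨid : ∀ z ∈ ball w (2 * ρ), ‖Ψ z - z‖ ≤ δ) :
    LipschitzOnWith (1 / 2) (fun z => z - Ψ z) (closedBall w δ) := by
  refine LipschitzOnWith.of_dist_le_mul fun z₁ h₁ z₂ h₂ => ?_
  rw [mem_closedBall, dist_eq_norm] at h₁ h₂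
  have hsub : ball z₂ ρ ⊆ ball w (2 * ρ) := ball_subset_ball' (by
    rw [dist_eq_norm]; linarith)
  have hmaps : MapsTo (fun z => z - Ψ z) (ball z₂ ρ) (closedBall (z₂ - Ψ z₂) (2 * δ)) := by
    intro z hz
    rw [mem_closedBall, dist_eq_norm]
    calc ‖z - Ψ z - (z₂ - Ψ z₂)‖ = ‖(Ψ z₂ - z₂) - (Ψ z - z)‖ := by congr 1; abel
      _ ≤ ‖Ψ z₂ - z₂‖ + ‖Ψ z - z‖ := norm_sub_le _ _
      _ ≤ δ + δ := add_le_add (hΨid z₂ (hsub (mem_ball_self hρ))) (hΨid z (hsub hz))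
      _ = 2 * δ := by ring
  have hz₁ : z₁ ∈ ball z₂ ρ := by
    rw [mem_ball, dist_eq_norm]
    calc ‖z₁ - z₂‖ = ‖(z₁ - w) - (z₂ - w)‖ := by congr 1; abel
      _ ≤ ‖z₁ - w‖ + ‖z₂ - w‖ := norm_sub_le _ _
      _ < ρ := by linarith
  calc dist (z₁ - Ψ z₁) (z₂ - Ψ z₂)
      ≤ 2 * δ / ρ * dist z₁ z₂ :=
        Complex.dist_le_div_mul_dist_of_mapsTo_ball
          ((differentiableOn_id.sub hΨ).mono hsub) hmaps hz₁
    _ ≤ (1 / 2 : NNReal) * dist z₁ z₂ := by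
        gcongr
        rw [div_le_iff₀ hρ]; push_cast; linarith

variable [CompleteSpace V]

theorem exists_mem_eq_of_norm_sub_id_le {Ψ : V → V} {K : AddSubgroup V}
    (hK : IsClosed (K : Set V)) {w : V} (hw : w ∈ K) {ρ δ : ℝ} (hρ : 0 < ρ) (hδρ : 4 * δ ≤ ρ)
    (hΨ : DifferentiableOn ℂ Ψ (ball w (2 * ρ)))
    (hΨK : ∀ z ∈ ball w (2 * ρ), z ∈ K → Ψ z ∈ K)
    (hΨid : ∀ z ∈ ball w (2 * ρ), ‖Ψ z - z‖ ≤ δ) :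
    ∃ z ∈ K, ‖z - w‖ ≤ δ ∧ Ψ z = w := by
  set s : Set V := K ∩ closedBall w δ
  have hδ : 0 ≤ δ := (norm_nonneg _).trans (hΨid w (mem_ball_self (by positivity)))
  have hball : closedBall w δ ⊆ ball w (2 * ρ) := closedBall_subset_ball (by linarith)
  have hmaps : MapsTo (fun z => w + (z - Ψ z)) s s := by
    rintro z ⟨hzK, hz⟩
    refine ⟨K.add_mem hw (K.sub_mem hzK (hΨK z (hball hz) hzK)), ?_⟩
    rw [mem_closedBall, dist_eq_norm, add_sub_cancel_left, norm_sub_rev]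
    exact hΨid z (hball hz)
  have hcontr : ContractingWith (1 / 2) (hmaps.restrict _ s s) := by
    refine ⟨by norm_num, LipschitzWith.of_dist_le_mul fun x y => ?_⟩
    have h := (lipschitzOnWith_sub_of_norm_sub_id_le hρ hδρ hΨ hΨid).dist_le_mul
      x x.2.2 y y.2.2
    simpa [Subtype.dist_eq, MapsTo.val_restrict_apply] using h
  obtain ⟨z, ⟨hzK, hz⟩, hfix, -⟩ := hcontr.exists_fixedPoint'
    (hK.inter isClosed_closedBall).isComplete hmaps ⟨hw, mem_closedBall_self hδ⟩
    (edist_ne_top _ _)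
  refine ⟨z, hzK, by rwa [mem_closedBall, dist_eq_norm] at hz, ?_⟩
  calc Ψ z = Ψ z + (w + (z - Ψ z) - z) := by
        rw [show w + (z - Ψ z) = z from hfix, sub_self, add_zero]
    _ = w := by abel

end ComplexBanach

section PhaseSpace

variable {n : ℕ}

-- `CVec n` carries the sup norm; `cNorm` is the Euclidean norm transported along this map.
def euclEquiv (n : ℕ) : CVec n ≃L[ℂ] EuclideanSpace ℂ (Fin n × Fin 2) :=
  LinearEquiv.toContinuousLinearEquiv <|
    (LinearEquiv.piCongrRight fun _ => (LinearEquiv.finTwoArrow ℂ ℂ).symm).trans <|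
      (LinearEquiv.curry ℂ ℂ (Fin n) (Fin 2)).symm.trans
        (EuclideanSpace.equiv _ ℂ).symm.toLinearEquiv

theorem sum_euclEquiv (F : ℂ → ℂ → ℝ) (z u : CVec n) :
    ∑ p, F (euclEquiv n z p) (euclEquiv n u p) =
      ∑ j, (F (z j).1 (u j).1 + F (z j).2 (u j).2) := by
  rw [Fintype.sum_prod_type]
  refine Finset.sum_congr rfl fun j _ => ?_
  rw [Fin.sum_univ_two]
  simp [euclEquiv]

theorem cNorm_eq_norm_euclEquiv (z : CVec n) : cNorm z = ‖euclEquiv n z‖ := by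
  rw [EuclideanSpace.norm_eq, cNorm, cNormSq]
  congr 1
  exact (sum_euclEquiv (fun a _ => ‖a‖ ^ 2) z z).symm

theorem cNorm_nonneg (z : CVec n) : 0 ≤ cNorm z := Real.sqrt_nonneg _

theorem cNorm_sq (z : CVec n) : cNorm z ^ 2 = cNormSq z :=
  Real.sq_sqrt (Finset.sum_nonneg fun _ _ => by positivity)

theorem cNorm_le_cNorm_add_cNorm_sub (z w : CVec n) : cNorm z ≤ cNorm w + cNorm (z - w) := by
  simp only [cNorm_eq_norm_euclEquiv, map_sub]
  exact norm_le_norm_add_norm_sub' _ _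

theorem cActionDist_le_add (z w : CVec n) (I0 : Fin n → ℝ) :
    cActionDist z I0 ≤ cActionDist w I0 + cNorm w * cNorm (z - w) + cNorm (z - w) ^ 2 / 2 := by
  set u := z - w
  have hpt : ∀ j, ‖cAction z j - I0 j‖ ≤ ‖cAction w j - I0 j‖
      + (‖(w j).1‖ * ‖(u j).1‖ + ‖(w j).2‖ * ‖(u j).2‖)
      + (‖(u j).1‖ ^ 2 + ‖(u j).2‖ ^ 2) / 2 := by
    intro j
    have e : cAction z j - I0 j = (cAction w j - I0 j)
        + ((w j).1 * (u j).1 + (w j).2 * (u j).2) + ((u j).1 ^ 2 + (u j).2 ^ 2) / 2 := by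
      simp only [u, cAction, Pi.sub_apply, Prod.fst_sub, Prod.snd_sub]; ring
    rw [e]
    refine norm_add₃_le.trans (add_le_add_three le_rfl ?_ ?_)
    · exact (norm_add_le _ _).trans_eq (by rw [norm_mul, norm_mul])
    · rw [norm_div, Complex.norm_two]
      gcongr
      exact (norm_add_le _ _).trans_eq (by rw [norm_pow, norm_pow])
  have hcs : ∑ j, (‖(w j).1‖ * ‖(u j).1‖ + ‖(w j).2‖ * ‖(u j).2‖) ≤ cNorm w * cNorm u := by
    rw [← sum_euclEquiv (fun a b => ‖a‖ * ‖b‖), cNorm_eq_norm_euclEquiv,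
      cNorm_eq_norm_euclEquiv, EuclideanSpace.norm_eq, EuclideanSpace.norm_eq]
    exact Real.sum_mul_le_sqrt_mul_sqrt _ _ _
  have hsq : ∑ j, (‖(u j).1‖ ^ 2 + ‖(u j).2‖ ^ 2) / 2 = cNorm u ^ 2 / 2 := by
    rw [← Finset.sum_div, cNorm_sq, cNormSq]
  calc cActionDist z I0 ≤ ∑ j, (‖cAction w j - I0 j‖
        + (‖(w j).1‖ * ‖(u j).1‖ + ‖(w j).2‖ * ‖(u j).2‖)
        + (‖(u j).1‖ ^ 2 + ‖(u j).2‖ ^ 2) / 2) := Finset.sum_le_sum fun j _ => hpt j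
    _ ≤ _ := by
      rw [Finset.sum_add_distrib, Finset.sum_add_distrib, hsq]
      exact add_le_add_three le_rfl hcs le_rfl

theorem domZ_subset_domZ {I0 : Fin n → ℝ} {r r' : ℝ × ℝ} (h₁ : r.1 ≤ r'.1) (h₂ : r.2 ≤ r'.2) :
    DomZ I0 r ⊆ DomZ I0 r' :=
  fun _ hz => ⟨hz.1.trans_le h₁, hz.2.trans_le h₂⟩

theorem mem_domZ_of_cNorm_sub_le {I0 : Fin n → ℝ} {r : ℝ × ℝ} {w z : CVec n}
    (hw : w ∈ DomZ I0 r) {s : ℝ} (hz : cNorm (z - w) ≤ s) :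
    z ∈ DomZ I0 (r.1 + r.2 * s + s ^ 2 / 2, r.2 + s) := by
  obtain ⟨hw₁, hw₂⟩ := hw
  have hd := cNorm_nonneg (z - w)
  refine ⟨?_, (cNorm_le_cNorm_add_cNorm_sub z w).trans_lt (by dsimp only; linarith)⟩
  have h₁ : cNorm w * cNorm (z - w) ≤ r.2 * s :=
    mul_le_mul hw₂.le hz hd ((cNorm_nonneg w).trans hw₂.le)
  have h₂ : cNorm (z - w) ^ 2 ≤ s ^ 2 := pow_le_pow_left₀ hd hz 2
  have := cActionDist_le_add z w I0
  dsimp only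
  linarith

def realVecs (n : ℕ) : AddSubgroup (CVec n) where
  carrier := {z | IsRealVec z}
  add_mem' ha hb j := by simp [(ha j).1, (hb j).1, (ha j).2, (hb j).2]
  zero_mem' j := by simp
  neg_mem' ha j := by simp [(ha j).1, (ha j).2]

@[simp]
theorem mem_realVecs {z : CVec n} : z ∈ realVecs n ↔ IsRealVec z := Iff.rfl

theorem isClosed_realVecs : IsClosed (realVecs n : Set (CVec n)) := by
  change IsClosed {z : CVec n | ∀ j, (z j).1.im = 0 ∧ (z j).2.im = 0}
  simp only [ofPred_forall, ofPred_and]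
  exact isClosed_iInter fun j =>
    (isClosed_eq (by fun_prop) continuous_const).inter (isClosed_eq (by fun_prop) continuous_const)

theorem exists_isRealVec_eq_of_cNorm_sub_id_le {Ψ : CVec n → CVec n} {w : CVec n}
    (hw : IsRealVec w) {ρ δ : ℝ} (hρ : 0 < ρ) (hδρ : 4 * δ ≤ ρ)
    (hΨ : ∀ z, cNorm (z - w) < 2 * ρ → DifferentiableAt ℂ Ψ z)
    (hΨreal : ∀ z, cNorm (z - w) < 2 * ρ → IsRealVec z → IsRealVec (Ψ z))
    (hΨid : ∀ z, cNorm (z - w) < 2 * ρ → cNorm (Ψ z - z) ≤ δ) :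
    ∃ z, IsRealVec z ∧ cNorm (z - w) ≤ δ ∧ Ψ z = w := by
  set e := euclEquiv n
  have he : ∀ v, cNorm (e.symm v - w) = ‖v - e w‖ := fun v => by
    rw [cNorm_eq_norm_euclEquiv, map_sub, e.apply_symm_apply]
  have hball : ∀ v ∈ ball (e w) (2 * ρ), cNorm (e.symm v - w) < 2 * ρ := fun v hv => by
    rwa [he, ← dist_eq_norm]
  obtain ⟨v, hvK, hvw, hΨv⟩ := exists_mem_eq_of_norm_sub_id_le (Ψ := e ∘ Ψ ∘ e.symm)
    (K := (realVecs n).comap e.symm.toLinearEquiv.toAddMonoidHom)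
    (isClosed_realVecs.preimage e.symm.continuous) (by simpa [e] using hw) hρ hδρ
    (fun v hv => (e.differentiableAt.comp v
      ((hΨ _ (hball v hv)).comp v e.symm.differentiableAt)).differentiableWithinAt)
    (fun v hv hvK => by simpa [e] using hΨreal _ (hball v hv) hvK)
    (fun v hv => by simpa [cNorm_eq_norm_euclEquiv, e] using hΨid _ (hball v hv))
  exact ⟨e.symm v, hvK, (he v).trans_le hvw, e.injective (by simpa using hΨv)⟩

end PhaseSpace

theorem four_mul_le_of_sq_mul_lt {m x r₁ r₂ c : ℝ} (hm : 1 ≤ m) (hx : 0 < x) (hr₁ : 0 < r₁)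
    (hr₂ : 0 < r₂) (hc : c ≤ 1 / 2592) (h : m ^ 2 * x < c * r₁ ^ 2 / r₂ ^ 2) :
    4 * (18 * m * r₂ / r₁ * x) ≤ r₁ / (4 * r₂) := by
  have h' : 2592 * (m ^ 2 * x) * r₂ ^ 2 < r₁ ^ 2 := by
    rw [lt_div_iff₀ (by positivity)] at h
    nlinarith [mul_le_mul_of_nonneg_right hc (sq_nonneg r₁)]
  have hmx : m * x ≤ m ^ 2 * x := by
    nlinarith [mul_nonneg (mul_nonneg (by linarith : 0 ≤ m) hx.le) (sub_nonneg.2 hm)]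
  rw [show 4 * (18 * m * r₂ / r₁ * x) = 72 * (m * x) * r₂ / r₁ by ring,
    div_le_div_iff₀ hr₁ (by positivity)]
  nlinarith [mul_le_mul_of_nonneg_right hmx (sq_nonneg r₂)]

theorem covering_normalizing_map_z_general (n : ℕ) (I0 : Fin n → ℝ)
    (A : Matrix (Fin n) (Fin n) ℝ) (M T ε : ℝ) (r : ℝ × ℝ) (m : ℕ)
    (Ψ : CVec n → CVec n)
    (hT : 0 < T) (hε : 0 < ε) (hm : 0 < m)
    (hr : 0 < r.1 ∧ 0 < r.2)
    -- hypotheses of the local stability lemma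
    (hs1 : r.1 < r.2 ^ 2 / 4)
    (hs5 : (m : ℝ) ^ 2 * ε * T <
      min (1 / 2592) (1 / (120 * Real.sqrt (M * l1OpNorm A))) * r.1 ^ 2 / r.2 ^ 2)
    -- Ψ is the real analytic symplectic transformation from the normal form lemma
    (hΨana : AnalyticOnNhd ℂ Ψ (DomZ I0 (2 * r.1, 2 * r.2)))
    (hΨreal : ∀ z ∈ DomZ I0 (2 * r.1, 2 * r.2), IsRealVec z → IsRealVec (Ψ z))
    (hΨid : ∀ z ∈ DomZ I0 (2 * r.1, 2 * r.2),
      cNorm (Ψ z - z) ≤ 18 * m * r.2 / r.1 * (ε * T)) :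
    ∀ w : CVec n, IsRealVec w → w ∈ DomZ I0 r →
      ∃ z : CVec n, IsRealVec z ∧ z ∈ DomZ I0 (5 / 3 * r.1, 5 / 3 * r.2) ∧ Ψ z = w := by
  intro w hwreal hw
  obtain ⟨hr₁, hr₂⟩ := hr
  set ρ := r.1 / (4 * r.2)
  set δ := 18 * m * r.2 / r.1 * (ε * T)
  have hρ : 0 < ρ := by positivity
  have hδ : 0 < δ := by positivity
  have hρr : 4 * ρ * r.2 = r.1 := by simp only [ρ]; field_simp
  have hρr₂ : 16 * ρ < r.2 := by nlinarith
  have hδρ : 4 * δ ≤ ρ := four_mul_le_of_sq_mul_lt (by exact_mod_cast hm) (mul_pos hε hT) hr₁ hr₂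
    (min_le_left _ _) (by rwa [← mul_assoc])
  have hball : ∀ z, cNorm (z - w) < 2 * ρ → z ∈ DomZ I0 (2 * r.1, 2 * r.2) := fun z hz =>
    domZ_subset_domZ (by dsimp only; nlinarith [mul_lt_mul_of_pos_left hρr₂ hρ])
      (by dsimp only; linarith) (mem_domZ_of_cNorm_sub_le hw hz.le)
  obtain ⟨z, hzreal, hzw, hΨz⟩ := exists_isRealVec_eq_of_cNorm_sub_id_le hwreal hρ hδρ
    (fun z hz => (hΨana _ (hball z hz)).differentiableAt)
    (fun z hz => hΨreal z (hball z hz)) (fun z hz => hΨid z (hball z hz))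
  refine ⟨z, hzreal, domZ_subset_domZ ?_ (by dsimp only; linarith)
    (mem_domZ_of_cNorm_sub_le hw hzw), hΨz⟩
  dsimp only
  nlinarith [mul_le_mul_of_nonneg_left hδρ hr₂.le, mul_le_mul_of_nonneg_left hδρ hδ.le,
    mul_lt_mul_of_pos_left hρr₂ hρ]

/-- **Covering property of the normalizing transformation (`z`-only case).** Under the
hypotheses of the local stability lemma in the large-`κ` case, the real analytic
symplectic transformation `Ψ : D_{2r} → D_{3r}` with `|Ψ − id|_{2r} ≤ (18mr₂/r₁)εT`
covers: `Ψ(D^{real}_{5r/3}) ⊇ D^{real}_r`. -/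
theorem covering_normalizing_map_z (n : ℕ) (ω I0 : Fin n → ℝ)
    (A : Matrix (Fin n) (Fin n) ℝ) (M T ε : ℝ) (r : ℝ × ℝ) (m : ℕ)
    (Ψ : CVec n → CVec n)
    (hA : A.IsSymm) (hM : 0 < M) (hT : 0 < T) (hε : 0 < ε) (hm : 0 < m)
    (hr : 0 < r.1 ∧ 0 < r.2)
    (hconv : ∀ I : Fin n → ℝ, (1 / M) * (l1Norm I) ^ 2 ≤ ∑ i, ∑ j, A i j * I i * I j)
    (hper : ∀ j, ∃ mz : ℤ, T * ω j = 2 * Real.pi * mz)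
    -- hypotheses of the local stability lemma
    (hs1 : r.1 < r.2 ^ 2 / 4)
    (hs2 : ε * M < r.1 ^ 2 / 2200)
    (hs3 : l1Norm I0 < r.2 ^ 2 / 16)
    (hs4 : 54 * m * l1OpNorm A * r.1 * T ≤ 1 / 4)
    (hs5 : (m : ℝ) ^ 2 * ε * T <
      min (1 / 2592) (1 / (120 * Real.sqrt (M * l1OpNorm A))) * r.1 ^ 2 / r.2 ^ 2)
    -- Ψ is the real analytic symplectic transformation from the normal form lemma
    (hΨana : AnalyticOnNhd ℂ Ψ (DomZ I0 (2 * r.1, 2 * r.2)))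
    (hΨmaps : Set.MapsTo Ψ (DomZ I0 (2 * r.1, 2 * r.2)) (DomZ I0 (3 * r.1, 3 * r.2)))
    (hΨreal : ∀ z ∈ DomZ I0 (2 * r.1, 2 * r.2), IsRealVec z → IsRealVec (Ψ z))
    (hΨsymp : IsSymplecticOnZ Ψ (DomZ I0 (2 * r.1, 2 * r.2)))
    (hΨid : ∀ z ∈ DomZ I0 (2 * r.1, 2 * r.2),
      cNorm (Ψ z - z) ≤ 18 * m * r.2 / r.1 * (ε * T)) :
    ∀ w : CVec n, IsRealVec w → w ∈ DomZ I0 r →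
      ∃ z : CVec n, IsRealVec z ∧ z ∈ DomZ I0 (5 / 3 * r.1, 5 / 3 * r.2) ∧ Ψ z = w :=
  covering_normalizing_map_z_general n I0 A M T ε r m Ψ hT hε hm hr hs1 hs5 hΨana hΨreal hΨid
end
end

section
/- Periodic approximation of frequency vectors. For every positive integer Q and every ω∈ℝⁿ with |ω|_∞>1, there exist ω⁰∈ℝⁿ and T∈[2π(1−|ω|_∞^{−1}), 2πQ] such that Tω⁰∈2πℤⁿ and |ω−ω⁰|_∞ ≤ 2π/(T·Q^{1/(n−1)}). -/
/-!
Let `s = |ω|_∞ = |ω j₀|` and `N = ⌈s - 1⌉`, so that `s - 1 ≤ N < s`. It suffices to find an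
integer `k ≥ 1` with `k N / s ≤ Q` that brings every `k N ω_j / s` within `Q^(-1/(n-1))` of an
integer: then `T = 2π k N / s` and `ω⁰ = 2π m / T`, with `m` these integers, do the job. The
`j₀` coordinate is `±k N` and costs nothing. For the other `n - 1` coordinates, Minkowski's
theorem applied to `ℤⁿ` and the preimage of the box `[-Qs/N, Qs/N] × [-δ, δ]^(n-1)` under the
volume-preserving shear `x ↦ (x₀, x₀ α - (x₁, …))`, where `α` collects the other coordinates
of `N ω / s`, gives a nonzero integer point as soon as `(Qs/N) δ^(n-1) > 1`, which holds for `δ = Q^(-1/(n-1))` because `N < s`.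
-/

open Real MeasureTheory Metric

section SimultaneousApproximation

variable {d : ℕ}

def shearTail (α : Fin d → ℝ) : (Fin (d + 1) → ℝ) →ₗ[ℝ] ℝ × (Fin d → ℝ) where
  toFun x := (x 0, x 0 • α - Fin.tail x)
  map_add' x y := by ext <;> simp [Fin.tail, add_smul]; ring
  map_smul' r x := by ext <;> simp [Fin.tail, mul_smul]; ring

lemma measurePreserving_shearTail (α : Fin d → ℝ) : MeasurePreserving (shearTail α) := by
  have hskew : MeasurePreserving (fun p : ℝ × (Fin d → ℝ) => (p.1, p.1 • α - p.2))
      (volume.prod volume) (volume.prod volume) :=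
    (MeasurePreserving.id volume).skew_product (by fun_prop)
      (ae_of_all _ fun t => (Measure.measurePreserving_sub_left volume (t • α)).map_eq)
  exact hskew.comp (volume_preserving_piFinSuccAbove (fun _ => ℝ) 0)

lemma volume_preimage_shearTail_closedBall_prod (α : Fin d → ℝ) (A : ℝ) {δ : ℝ} (hδ : 0 ≤ δ) :
    volume (shearTail α ⁻¹' closedBall 0 A ×ˢ closedBall 0 δ) =
      ENNReal.ofReal (2 * A * (2 * δ) ^ d) := by
  rw [(measurePreserving_shearTail α).measure_preimage
    (isClosed_closedBall.prod isClosed_closedBall).measurableSet.nullMeasurableSet,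
    Measure.volume_eq_prod, Measure.prod_prod, Real.volume_closedBall,
    Real.volume_pi_closedBall _ hδ, Fintype.card_fin, ← ENNReal.ofReal_mul' (by positivity)]

theorem exists_int_ne_zero_abs_le_abs_mul_sub_le (α : Fin d → ℝ) {A δ : ℝ} (hδ : 0 ≤ δ)
    (h : 1 < A * δ ^ d) :
    ∃ c : Fin (d + 1) → ℤ, c ≠ 0 ∧ |(c 0 : ℝ)| ≤ A ∧ ∀ i, |c 0 * α i - c i.succ| ≤ δ := by
  have : Countable (Submodule.span ℤ (Set.range (Pi.basisFun ℝ (Fin (d + 1))))).toAddSubgroup :=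
    inferInstanceAs (Countable (Submodule.span ℤ _))
  have hvol : volume (ZSpan.fundamentalDomain (Pi.basisFun ℝ (Fin (d + 1)))) *
      2 ^ Module.finrank ℝ (Fin (d + 1) → ℝ) <
      volume (shearTail α ⁻¹' closedBall 0 A ×ˢ closedBall 0 δ) := by
    have hlt : (2 : ℝ) ^ (d + 1) < 2 * A * (2 * δ) ^ d := by
      rw [mul_pow, pow_succ]
      nlinarith [pow_pos (two_pos (α := ℝ)) d]
    rw [ZSpan.fundamentalDomain_pi_basisFun, Real.volume_pi_Ico,
      volume_preimage_shearTail_closedBall_prod α A hδ]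
    simp only [sub_zero, ENNReal.ofReal_one, Finset.prod_const_one,
      one_mul, Module.finrank_fin_fun]
    rw [← ENNReal.ofReal_ofNat, ← ENNReal.ofReal_pow zero_le_two]
    exact (ENNReal.ofReal_lt_ofReal_iff_of_nonneg (by positivity)).mpr hlt
  obtain ⟨⟨x, hxL⟩, hx0, hxS⟩ := exists_ne_zero_mem_lattice_of_measure_mul_two_pow_lt_measure
    (ZSpan.isAddFundamentalDomain' _ volume) (fun x hx => by simpa using hx)
    ((convex_closedBall 0 A).prod (convex_closedBall 0 δ) |>.linear_preimage (shearTail α)) hvol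
  have hint : ∀ i, ∃ z : ℤ, (z : ℝ) = x i := fun i => by
    simpa using ((Pi.basisFun ℝ _).mem_span_iff_repr_mem ℤ x).mp hxL i
  choose c hc using hint
  obtain rfl : (fun i => (c i : ℝ)) = x := funext hc
  simp only [Set.mem_preimage, Set.mem_prod, mem_closedBall_zero_iff, shearTail, LinearMap.coe_mk,
    AddHom.coe_mk, Real.norm_eq_abs, pi_norm_le_iff_of_nonneg hδ] at hxS
  refine ⟨c, fun h0 => hx0 (by simp [h0]; rfl), hxS.1, fun i => ?_⟩
  simpa [Fin.tail] using hxS.2 i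

theorem exists_pos_int_le_abs_mul_sub_le (α : Fin d → ℝ) {A δ : ℝ} (hδ₀ : 0 ≤ δ) (hδ₁ : δ ≤ 1)
    (h : 1 < A * δ ^ d) :
    ∃ k : ℤ, 0 < k ∧ (k : ℝ) ≤ A ∧ ∀ i, ∃ m : ℤ, |k * α i - m| ≤ δ := by
  rcases hδ₁.lt_or_eq with hδ₁ | rfl
  · obtain ⟨c, hc, hcA, hcδ⟩ := exists_int_ne_zero_abs_le_abs_mul_sub_le α hδ₀ h
    have hc₀ : c 0 ≠ 0 := by
      intro h₀
      refine hc (funext fun j => Fin.cases h₀ (fun i => ?_) j)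
      have hi : |(c i.succ : ℝ)| < 1 := by simpa [h₀] using (hcδ i).trans_lt hδ₁
      exact Int.abs_lt_one_iff.mp (by exact_mod_cast hi)
    rcases hc₀.lt_or_gt with hneg | hpos
    · refine ⟨-c 0, by omega, ?_, fun i => ⟨-c i.succ, ?_⟩⟩
      · simpa [abs_of_neg (Int.cast_lt_zero.mpr hneg)] using hcA
      · simpa [← abs_neg (_ * α i - _), neg_add_eq_sub] using hcδ i
    · refine ⟨c 0, hpos, ?_, fun i => ⟨c i.succ, hcδ i⟩⟩
      simpa [abs_of_pos (Int.cast_pos.mpr hpos)] using hcA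
  · refine ⟨1, one_pos, by simpa using h.le, fun i => ⟨round (α i), ?_⟩⟩
    simpa using (abs_sub_round (α i)).trans (by norm_num)

theorem exists_pos_int_le_abs_mul_sub_le_of_apply_eq_intCast (β : Fin (d + 1) → ℝ)
    {j₀ : Fin (d + 1)} {z : ℤ} (hz : β j₀ = z) {A δ : ℝ} (hδ₀ : 0 ≤ δ) (hδ₁ : δ ≤ 1)
    (h : 1 < A * δ ^ d) :
    ∃ k : ℤ, 0 < k ∧ (k : ℝ) ≤ A ∧ ∀ j, ∃ m : ℤ, |k * β j - m| ≤ δ := by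
  obtain ⟨k, hk, hkA, hm⟩ := exists_pos_int_le_abs_mul_sub_le (β ∘ j₀.succAbove) hδ₀ hδ₁ h
  refine ⟨k, hk, hkA, fun j => ?_⟩
  rcases Fin.eq_self_or_eq_succAbove j₀ j with rfl | ⟨i, rfl⟩
  · exact ⟨k * z, by simp [hz, hδ₀]⟩
  · exact hm i

end SimultaneousApproximation

lemma exists_periodic_approx_of_abs_mul_sub_le {ι : Type*} (ω : ι → ℝ) {c R : ℝ} (hc : 0 < c)
    (h : ∀ j, ∃ m : ℤ, |c * ω j - m| ≤ R⁻¹) :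
    ∃ ω0 : ι → ℝ, (∀ j, ∃ m : ℤ, 2 * π * c * ω0 j = 2 * π * m) ∧
      ∀ j, |ω j - ω0 j| ≤ 2 * π / (2 * π * c * R) := by
  choose m hm using h
  refine ⟨fun j => m j / c, fun j => ⟨m j, by field_simp⟩, fun j => ?_⟩
  calc |ω j - m j / c| = |c * ω j - m j| / c := by
        rw [← abs_of_pos hc, ← abs_div, abs_of_pos hc]; congr 1; field_simp
    _ ≤ R⁻¹ / c := by gcongr; exact hm j
    _ = 2 * π / (2 * π * c * R) := by
        rw [mul_assoc, ← div_div, div_self (by positivity), one_div, mul_inv,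
          div_eq_mul_inv, mul_comm]

lemma div_mul_eq_intCast_sign_mul {x s : ℝ} (hs : 0 < s) (hx : |x| = s) (N : ℤ) :
    N / s * x = ((SignType.sign x * N : ℤ) : ℝ) := by
  rcases abs_eq hs.le |>.mp hx with rfl | rfl <;>
    · field_simp; simp [sign_pos, hs]

lemma exists_nat_pos_sub_one_le_lt {s : ℝ} (hs : 1 < s) :
    ∃ N : ℕ, 0 < N ∧ s - 1 ≤ N ∧ (N : ℝ) < s :=
  ⟨⌈s - 1⌉₊, Nat.ceil_pos.mpr (by linarith), Nat.le_ceil _,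
    by linarith [Nat.ceil_lt_add_one (by linarith : 0 ≤ s - 1)]⟩

/-- **Periodic approximation of frequency vectors.** For every positive integer `Q` and every
`ω ∈ ℝⁿ` (`n ≥ 2`) with `|ω|_∞ > 1`, there exist `ω⁰ ∈ ℝⁿ` and
`T ∈ [2π(1 - |ω|_∞⁻¹), 2πQ]` such that `Tω⁰ ∈ 2πℤⁿ` and
`|ω - ω⁰|_∞ ≤ 2π/(T Q^{1/(n-1)})`. -/
theorem periodic_approximation_of_frequencies (n Q : ℕ) (hn : 2 ≤ n) (hQ : 0 < Q)
    (ω : Fin n → ℝ) (hω : 1 < ⨆ j, |ω j|) :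
    ∃ (ω0 : Fin n → ℝ) (T : ℝ),
      T ∈ Set.Icc (2 * π * (1 - (⨆ j, |ω j|)⁻¹)) (2 * π * Q) ∧
      (∀ j, ∃ m : ℤ, T * ω0 j = 2 * π * m) ∧
      ∀ j, |ω j - ω0 j| ≤ 2 * π / (T * (Q : ℝ) ^ ((1 : ℝ) / ((n : ℝ) - 1))) := by
  obtain ⟨d, rfl⟩ : ∃ d, n = d + 1 := ⟨n - 1, by omega⟩
  set s := ⨆ j, |ω j|
  obtain ⟨j₀, hj₀⟩ := exists_eq_ciSup_of_finite (f := fun j => |ω j|)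
  obtain ⟨N, hN, hN₁, hNs⟩ := exists_nat_pos_sub_one_le_lt hω
  have hN₀ : (0 : ℝ) < N := by exact_mod_cast hN
  set R := (Q : ℝ) ^ ((1 : ℝ) / (((d + 1 : ℕ) : ℝ) - 1))
  have hQ' : (0 : ℝ) < Q := by exact_mod_cast hQ
  have hR : R = (Q : ℝ) ^ (d⁻¹ : ℝ) := by simp [R]
  have hR₁ : 1 ≤ R := hR ▸ Real.one_le_rpow (by exact_mod_cast hQ) (by positivity)
  have hRd : R⁻¹ ^ d = (Q : ℝ)⁻¹ := by
    rw [inv_pow, hR, Real.rpow_inv_natCast_pow hQ'.le (by omega)]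
  obtain ⟨k, hk, hkA, hm⟩ := exists_pos_int_le_abs_mul_sub_le_of_apply_eq_intCast
    (fun j => (N : ℤ) / s * ω j) (div_mul_eq_intCast_sign_mul (by linarith) hj₀ N) (A := Q * s / N) (δ := R⁻¹) (by positivity)
    (inv_le_one_of_one_le₀ hR₁)
    (by rwa [hRd, mul_comm, ← mul_div_assoc, inv_mul_cancel_left₀ hQ'.ne', one_lt_div hN₀])
  obtain ⟨ω0, hper, happrox⟩ := exists_periodic_approx_of_abs_mul_sub_le ω (c := N * k / s)
    (R := R) (by positivity) (fun j => (hm j).imp fun m hm => by convert hm using 3; push_cast; ring)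
  refine ⟨ω0, 2 * π * (N * k / s), ⟨?_, ?_⟩, hper, happrox⟩
  · have hk₁ : (1 : ℝ) ≤ k := by exact_mod_cast hk
    gcongr
    calc 1 - s⁻¹ = (s - 1) / s := by field_simp
      _ ≤ N * k / s := by gcongr; nlinarith
  · gcongr
    rwa [div_le_iff₀ (by linarith), mul_comm, ← le_div_iff₀ hN₀]
end
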